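/- For any ring R and any R-module M, the flat dimension of M equals the injective dimension of its character module M⁺ = Hom_ℤ(M, ℚ/ℤ). -/

import Mathlib

open TensorProduct

universe u

section NCTensor
variable (R : Type u) [Ring R]

/-- Generators of the defect submodule used to define the tensor product of a right
`R`-module `N` and a left `R`-module `M` over a (possibly noncommutative) ring `R`. -/
def NCRel (N M : Type u) [AddCommGroup N] [Module Rᵐᵒᵖ N] [AddCommGroup M] [Module R M] :
    Submodule ℤ (N ⊗[ℤ] M) :=
  Submodule.span ℤ { t | ∃ (n : N) (r : R) (m : M),
    t = (MulOpposite.op r • n) ⊗ₜ[ℤ] m - n ⊗ₜ[ℤ] (r • m) }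

/-- The tensor product `N ⊗_R M` of a right `R`-module and a left `R`-module, as an
abelian group. -/
def NCTensor (N M : Type u) [AddCommGroup N] [Module Rᵐᵒᵖ N] [AddCommGroup M] [Module R M] :
    Type u :=
  (N ⊗[ℤ] M) ⧸ NCRel R N M

noncomputable instance (N M : Type u) [AddCommGroup N] [Module Rᵐᵒᵖ N] [AddCommGroup M] [Module R M] :
    AddCommGroup (NCTensor R N M) :=
  inferInstanceAs (AddCommGroup ((N ⊗[ℤ] M) ⧸ NCRel R N M))

noncomputable instance (N M : Type u) [AddCommGroup N] [Module Rᵐᵒᵖ N] [AddCommGroup M] [Module R M] :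
    Module ℤ (NCTensor R N M) :=
  inferInstanceAs (Module ℤ ((N ⊗[ℤ] M) ⧸ NCRel R N M))

/-- The map `I ⊗_R M → I ⊗_R M'` induced by a map `M →ₗ[R] M'` of left modules. -/
noncomputable def NCmap (N : Type u) [AddCommGroup N] [Module Rᵐᵒᵖ N] {M M' : Type u} [AddCommGroup M]
    [Module R M] [AddCommGroup M'] [Module R M'] (f : M →ₗ[R] M') :
    NCTensor R N M →ₗ[ℤ] NCTensor R N M' :=
  Submodule.mapQ _ _ (LinearMap.lTensor N (f.restrictScalars ℤ)) <| by
    rw [NCRel, Submodule.span_le]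
    rintro t ⟨n, r, m, rfl⟩
    refine Submodule.mem_comap.mpr (Submodule.subset_span ?_)
    refine ⟨n, r, f m, ?_⟩
    show LinearMap.lTensor N (f.restrictScalars ℤ) ((MulOpposite.op r • n) ⊗ₜ[ℤ] m - n ⊗ₜ[ℤ] (r • m)) = _
    simp [LinearMap.lTensor_tmul, map_sub, LinearMap.map_smul]

/-- The map `N ⊗_R M → N' ⊗_R M` induced by a map `N →ₗ[Rᵐᵒᵖ] N'` of right modules. -/
noncomputable def NCmapL (R : Type u) [Ring R] {N N' : Type u} [AddCommGroup N]
    [Module Rᵐᵒᵖ N] [AddCommGroup N'] [Module Rᵐᵒᵖ N'] (M : Type u) [AddCommGroup M]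
    [Module R M] (f : N →ₗ[Rᵐᵒᵖ] N') :
    NCTensor R N M →ₗ[ℤ] NCTensor R N' M :=
  Submodule.mapQ _ _ (LinearMap.rTensor M f.toAddMonoidHom.toIntLinearMap) <| by
    rw [NCRel, Submodule.span_le]
    rintro t ⟨n, r, m, rfl⟩
    refine Submodule.mem_comap.mpr (Submodule.subset_span ?_)
    refine ⟨f n, r, m, ?_⟩
    show LinearMap.rTensor M f.toAddMonoidHom.toIntLinearMap ((MulOpposite.op r • n) ⊗ₜ[ℤ] m - n ⊗ₜ[ℤ] (r • m)) = _
    simp [LinearMap.rTensor_tmul, map_sub, LinearMap.map_smul]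

/-- A left `R`-module `M` (over a possibly noncommutative ring) is flat if tensoring with
`M` preserves injectivity of maps of right `R`-modules. -/
def FlatModule (R : Type u) [Ring R] (M : Type u) [AddCommGroup M] [Module R M] : Prop :=
  ∀ (N N' : Type u) [AddCommGroup N] [Module Rᵐᵒᵖ N] [AddCommGroup N'] [Module Rᵐᵒᵖ N']
    (f : N →ₗ[Rᵐᵒᵖ] N'), Function.Injective f → Function.Injective (NCmapL R M f)

end NCTensor
section GDefs
variable (R : Type u) [Ring R]

/-- A complete flat resolution witnessing that `M` is a Gorenstein flat left `R`-module:
an exact sequence `⋯ → F₂ → F₁ → F₀ → F₋₁ → ⋯` of flat left `R`-modules with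
`M ≅ Im(F₀ → F₋₁)` which stays exact after applying `I ⊗_R -` for every injective right
`R`-module `I`. -/
structure CompleteFlatResolution (M : Type u) [AddCommGroup M] [Module R M] :
    Type (u + 1) where
  F : ℤ → ModuleCat.{u} R
  d : ∀ z : ℤ, F (z + 1) →ₗ[R] F z
  flat : ∀ z, FlatModule R (F z)
  exact : ∀ z, Function.Exact (d (z + 1)) (d z)
  iso : Nonempty (M ≃ₗ[R] LinearMap.range (d (-1)))
  tensorExact : ∀ (I : Type u) [AddCommGroup I] [Module Rᵐᵒᵖ I], Module.Injective Rᵐᵒᵖ I →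
    ∀ z, Function.Exact (NCmap R I (d (z + 1))) (NCmap R I (d z))

/-- A left `R`-module is Gorenstein flat if it admits a complete flat resolution. -/
def IsGorensteinFlat (M : Type u) [AddCommGroup M] [Module R M] : Prop :=
  Nonempty (CompleteFlatResolution R M)

/-- A complete projective resolution witnessing that `M` is a Gorenstein projective left
`R`-module. -/
structure CompleteProjResolution (M : Type u) [AddCommGroup M] [Module R M] :
    Type (u + 1) where
  P : ℤ → ModuleCat.{u} R
  d : ∀ z : ℤ, P (z + 1) →ₗ[R] P z
  proj : ∀ z, Module.Projective R (P z)
  exact : ∀ z, Function.Exact (d (z + 1)) (d z)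
  iso : Nonempty (M ≃ₗ[R] LinearMap.range (d (-1)))
  homExact : ∀ (Q : Type u) [AddCommGroup Q] [Module R Q], Module.Projective R Q →
    ∀ z, Function.Exact (fun g : P z →ₗ[R] Q => g.comp (d z))
      (fun g : P (z + 1) →ₗ[R] Q => g.comp (d (z + 1)))

/-- A left `R`-module is Gorenstein projective if it admits a complete projective
resolution. -/
def IsGorensteinProjective (M : Type u) [AddCommGroup M] [Module R M] : Prop :=
  Nonempty (CompleteProjResolution R M)

/-- `gfdLE R n M` : the Gorenstein flat dimension of the left `R`-module `M` is at most
`n`, i.e. `M` has a resolution of length `n` by Gorenstein flat modules. -/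
def gfdLE : ℕ → ModuleCat.{u} R → Prop
  | 0, M => IsGorensteinFlat R M
  | n + 1, M => ∃ (G : ModuleCat.{u} R) (f : G →ₗ[R] M), Function.Surjective f ∧
      IsGorensteinFlat R G ∧ gfdLE n (ModuleCat.of R (LinearMap.ker f))

/-- `gpdLE R n M` : the Gorenstein projective dimension of `M` is at most `n`. -/
def gpdLE : ℕ → ModuleCat.{u} R → Prop
  | 0, M => IsGorensteinProjective R M
  | n + 1, M => ∃ (G : ModuleCat.{u} R) (f : G →ₗ[R] M), Function.Surjective f ∧
      IsGorensteinProjective R G ∧ gpdLE n (ModuleCat.of R (LinearMap.ker f))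

/-- `fdLE R n M` : the flat dimension of `M` is at most `n`. -/
def fdLE : ℕ → ModuleCat.{u} R → Prop
  | 0, M => FlatModule R M
  | n + 1, M => ∃ (G : ModuleCat.{u} R) (f : G →ₗ[R] M), Function.Surjective f ∧
      FlatModule R G ∧ fdLE n (ModuleCat.of R (LinearMap.ker f))

/-- `pdLE R n M` : the projective dimension of `M` is at most `n`. -/
def pdLE : ℕ → ModuleCat.{u} R → Prop
  | 0, M => Module.Projective R M
  | n + 1, M => ∃ (G : ModuleCat.{u} R) (f : G →ₗ[R] M), Function.Surjective f ∧
      Module.Projective R G ∧ pdLE n (ModuleCat.of R (LinearMap.ker f))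

/-- `idLE R n M` : the injective dimension of `M` is at most `n`. -/
def idLE : ℕ → ModuleCat.{u} R → Prop
  | 0, M => Module.Injective R M
  | n + 1, M => ∃ (I : ModuleCat.{u} R) (f : M →ₗ[R] I), Function.Injective f ∧
      Module.Injective R I ∧ idLE n (ModuleCat.of R (I ⧸ LinearMap.range f))

/-- Gorenstein flat dimension, valued in `ℕ∞`. -/
noncomputable def gfDim (M : ModuleCat.{u} R) : ℕ∞ :=
  sInf {n : ℕ∞ | ∃ k : ℕ, n = k ∧ gfdLE R k M}

/-- Flat dimension, valued in `ℕ∞`. -/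
noncomputable def flatDim (M : ModuleCat.{u} R) : ℕ∞ :=
  sInf {n : ℕ∞ | ∃ k : ℕ, n = k ∧ fdLE R k M}

/-- Injective dimension, valued in `ℕ∞`. -/
noncomputable def injDim (M : ModuleCat.{u} R) : ℕ∞ :=
  sInf {n : ℕ∞ | ∃ k : ℕ, n = k ∧ idLE R k M}

/-- The (left) weak Gorenstein global dimension of `R`:
the supremum of Gorenstein flat dimensions of all left `R`-modules. -/
noncomputable def wGgldim : ℕ∞ :=
  ⨆ M : ModuleCat.{u} R, gfDim R M

/-- `IFD R` : the supremum of flat dimensions of injective left `R`-modules. -/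
noncomputable def IFD : ℕ∞ :=
  ⨆ M : ModuleCat.{u} R, ⨆ (_ : Module.Injective R M), flatDim R M

/-- A ring is left coherent if every finitely generated left ideal is finitely
presented. -/
def LeftCoherent : Prop :=
  ∀ I : Submodule R R, I.FG → Module.FinitePresentation R I

/-- A ring is right coherent if every finitely generated right ideal is finitely
presented; right ideals are viewed as left ideals of `Rᵐᵒᵖ`. -/
def RightCoherent : Prop := LeftCoherent Rᵐᵒᵖ

end GDefs

/-- `TorVanishGT R n I M` : `Tor_i^R(I, M) = 0` for all `i > n`, expressed by saying that
for every projective resolution `P• → M` of left modules, the complex `I ⊗_R P•` obtained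
by tensoring with the right module `I` is exact at every spot of index `> n`. -/
noncomputable def TorVanishGT (R : Type u) [Ring R] (n : ℕ) (I : Type u) [AddCommGroup I]
    [Module Rᵐᵒᵖ I] (M : ModuleCat.{u} R) : Prop :=
  ∀ (P : ℕ → ModuleCat.{u} R) (d : ∀ i, P (i + 1) →ₗ[R] P i) (ε : P 0 →ₗ[R] M),
    (∀ i, Module.Projective R (P i)) → Function.Surjective ε →
    Function.Exact (d 0) ε → (∀ i, Function.Exact (d (i + 1)) (d i)) →
    ∀ j, n ≤ j → Function.Exact (NCmap R I (d (j + 1))) (NCmap R I (d j))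
/-- The character module `M⁺ = Hom_ℤ(M, ℚ/ℤ)` of a left `R`-module is a right
`R`-module. -/
noncomputable instance charRightModule (R : Type u) [Ring R] (A : Type u) [AddCommGroup A]
    [Module R A] : Module Rᵐᵒᵖ (CharacterModule A) :=
  inferInstanceAs (Module Rᵈᵐᵃ (A →+ AddCircle (1 : ℚ)))

/-!
By Lambek's theorem, `M` is flat iff `M⁺` is injective: the adjunction
`(N ⊗_R M)⁺ ≃ Hom_{Rᵒᵖ}(N, M⁺)` turns injectivity of `N → N'` tensored with `M` into
surjectivity of `Hom(N', M⁺) → Hom(N, M⁺)`, and `ℚ/ℤ`-duality detects injectivity.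

Both dimensions are then compared one step at a time. An exact sequence `0 → K → G → M → 0`
with `G` flat dualizes to `0 → M⁺ → G⁺ → K⁺ → 0` with `G⁺` injective. Conversely, for a
surjection `F → M` from a free module, `F⁺` is a product of copies of the injective module `R⁺`,
and Schanuel's lemma for injective modules shows that the cokernel `K⁺` of `M⁺ → F⁺` has
injective dimension one less than `M⁺`, whichever embedding into an injective module witnesses
the dimension of `M⁺`.
-/

section InjectiveDimension
variable {S : Type u} [Ring S]

lemma Module.Injective.of_retraction {A B : Type u} [AddCommGroup A] [Module S A]
    [AddCommGroup B] [Module S B] (i : B →ₗ[S] A) (r : A →ₗ[S] B) (hri : ∀ b, r (i b) = b)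
    (hA : Module.Injective S A) : Module.Injective S B := by
  refine ⟨fun X Y _ _ _ _ f hf g => ?_⟩
  obtain ⟨h, hh⟩ := hA.out f hf (i ∘ₗ g)
  exact ⟨r ∘ₗ h, fun x => by simp [hh, hri]⟩

lemma Module.Injective.of_linearEquiv {A B : Type u} [AddCommGroup A] [Module S A]
    [AddCommGroup B] [Module S B] (e : A ≃ₗ[S] B) (hA : Module.Injective S A) :
    Module.Injective S B :=
  .of_retraction e.symm.toLinearMap e.toLinearMap e.apply_symm_apply hA

lemma Module.Injective.prod {A B : Type u} [AddCommGroup A] [Module S A] [AddCommGroup B]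
    [Module S B] (hA : Module.Injective S A) (hB : Module.Injective S B) :
    Module.Injective S (A × B) := by
  refine ⟨fun X Y _ _ _ _ f hf g => ?_⟩
  obtain ⟨h₁, hh₁⟩ := hA.out f hf (LinearMap.fst S A B ∘ₗ g)
  obtain ⟨h₂, hh₂⟩ := hB.out f hf (LinearMap.snd S A B ∘ₗ g)
  exact ⟨h₁.prod h₂, fun x => by simp [hh₁, hh₂]⟩

lemma idLE_of_linearEquiv (n : ℕ) {M N : ModuleCat.{u} S} (e : M ≃ₗ[S] N) (h : idLE S n M) :
    idLE S n N := by
  induction n generalizing M N with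
  | zero => exact Module.Injective.of_linearEquiv e h
  | succ n ih =>
    obtain ⟨I, f, hf, hI, hC⟩ := h
    refine ⟨I, f ∘ₗ e.symm.toLinearMap, hf.comp e.symm.injective, hI, ih ?_ hC⟩
    exact Submodule.quotEquivOfEq _ _ (by rw [LinearMap.range_comp, LinearEquiv.range,
      Submodule.map_top])

lemma idLE_prod_of_injective {J : Type u} [AddCommGroup J] [Module S J]
    (hJ : Module.Injective S J) {n : ℕ} {M : ModuleCat.{u} S} (h : idLE S n M) :
    idLE S n (ModuleCat.of S (J × M)) := by
  cases n with
  | zero => exact hJ.prod h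
  | succ n =>
    obtain ⟨I, f, hf, hI, hC⟩ := h
    refine ⟨ModuleCat.of S (J × I), LinearMap.id.prodMap f, Function.injective_id.prodMap hf,
      hJ.prod hI, idLE_of_linearEquiv n ?_ hC⟩
    have hexact : Function.Exact (LinearMap.id.prodMap f)
        ((LinearMap.range f).mkQ ∘ₗ LinearMap.snd S J I) := by
      rintro ⟨j, i⟩
      simp
    exact (hexact.linearEquivOfSurjective
      ((LinearMap.range f).mkQ_surjective.comp LinearMap.snd_surjective)).symm

lemma idLE_of_idLE_prod {I D : Type u} [AddCommGroup I] [Module S I] [AddCommGroup D]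
    [Module S D] (hI : Module.Injective S I) {n : ℕ} (h : idLE S n (ModuleCat.of S (I × D))) :
    idLE S n (ModuleCat.of S D) := by
  cases n with
  | zero => exact .of_retraction (LinearMap.inr S I D) (LinearMap.snd S I D) (fun _ => rfl) h
  | succ n =>
    obtain ⟨E, u, hu, hE, hC⟩ := h
    obtain ⟨ρ, hρ⟩ := hI.out u hu (LinearMap.fst S I D)
    refine ⟨E, u ∘ₗ LinearMap.inr S I D, hu.comp LinearMap.inr_injective, hE,
      idLE_of_linearEquiv n ?_ (idLE_prod_of_injective hI hC)⟩
    have hexact : Function.Exact (u ∘ₗ LinearMap.inr S I D) (ρ.prod (LinearMap.range u).mkQ) := by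
      intro e
      constructor
      · intro he
        have hρe : ρ e = 0 := congrArg Prod.fst he
        obtain ⟨⟨i, d⟩, rfl⟩ : e ∈ LinearMap.range u :=
          (Submodule.Quotient.mk_eq_zero _).mp (congrArg Prod.snd he)
        obtain rfl : i = 0 := by simpa [hρ] using hρe
        exact ⟨d, rfl⟩
      · rintro ⟨d, rfl⟩
        simp [hρ]
    have hsurj : Function.Surjective (ρ.prod (LinearMap.range u).mkQ) := by
      rintro ⟨i, c⟩
      obtain ⟨e, rfl⟩ := (LinearMap.range u).mkQ_surjective c
      refine ⟨e + u (i - ρ e, 0), ?_⟩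
      simp [hρ]
    exact (hexact.linearEquivOfSurjective hsurj).symm

section Schanuel
variable {M A B : Type u} [AddCommGroup M] [Module S M] [AddCommGroup A] [Module S A]
  [AddCommGroup B] [Module S B]

/-- The shear `(a, b) ↦ (a - φ b, b)` carries `range (f.prod g)` onto `0 × range g`. -/
noncomputable def quotRangeProdEquiv (f : M →ₗ[S] A) (g : M →ₗ[S] B) (φ : B →ₗ[S] A)
    (hφ : ∀ m, φ (g m) = f m) :
    ((A × B) ⧸ LinearMap.range (f.prod g)) ≃ₗ[S] A × (B ⧸ LinearMap.range g) := by
  refine Function.Exact.linearEquivOfSurjective (g := (LinearMap.fst S A B - φ ∘ₗ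
    LinearMap.snd S A B).prod ((LinearMap.range g).mkQ ∘ₗ LinearMap.snd S A B)) ?_ ?_
  · intro x
    constructor
    · obtain ⟨a, b⟩ := x
      intro h
      have ha : a = φ b := sub_eq_zero.mp (congrArg Prod.fst h)
      obtain ⟨m, rfl⟩ : b ∈ LinearMap.range g :=
        (Submodule.Quotient.mk_eq_zero _).mp (congrArg Prod.snd h)
      exact ⟨m, by simp [ha, hφ]⟩
    · rintro ⟨m, rfl⟩
      simp [hφ]
  · rintro ⟨a, c⟩
    obtain ⟨b, rfl⟩ := (LinearMap.range g).mkQ_surjective c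
    exact ⟨(a + φ b, b), by simp⟩

noncomputable def schanuelEquiv {f : M →ₗ[S] A} {g : M →ₗ[S] B} (φ : B →ₗ[S] A)
    (hφ : ∀ m, φ (g m) = f m) (ψ : A →ₗ[S] B) (hψ : ∀ m, ψ (f m) = g m) :
    (B × (A ⧸ LinearMap.range f)) ≃ₗ[S] A × (B ⧸ LinearMap.range g) :=
  (quotRangeProdEquiv g f ψ hψ).symm ≪≫ₗ
    Submodule.Quotient.equiv _ _ (LinearEquiv.prodComm S B A)
      (by rw [← LinearMap.range_comp]; rfl) ≪≫ₗ
    quotRangeProdEquiv f g φ hφ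

end Schanuel

lemma idLE_quotient_of_idLE_succ {n : ℕ} {M : ModuleCat.{u} S} (h : idLE S (n + 1) M)
    {J : Type u} [AddCommGroup J] [Module S J] (hJ : Module.Injective S J) (g : M →ₗ[S] J)
    (hg : Function.Injective g) : idLE S n (ModuleCat.of S (J ⧸ LinearMap.range g)) := by
  obtain ⟨I, f, hf, hI, hC⟩ := h
  obtain ⟨φ, hφ⟩ := hI.out g hg f
  obtain ⟨ψ, hψ⟩ := hJ.out f hf g
  exact idLE_of_idLE_prod hI
    (idLE_of_linearEquiv n (schanuelEquiv φ hφ ψ hψ) (idLE_prod_of_injective hJ hC))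

end InjectiveDimension

namespace CharacterModule
variable {A B C : Type*} [AddCommGroup A] [AddCommGroup B] [AddCommGroup C]

lemma exact_dual {f : A →ₗ[ℤ] B} {g : B →ₗ[ℤ] C} (hfg : Function.Exact f g)
    (hg : Function.Surjective g) : Function.Exact (dual g) (dual f) := by
  intro χ
  constructor
  · intro hχ
    have hle : LinearMap.range f ≤ LinearMap.ker χ.toIntLinearMap := by
      rintro _ ⟨a, rfl⟩
      exact DFunLike.congr_fun hχ a
    refine ⟨((LinearMap.range f).liftQ _ hle ∘ₗ
      (hfg.linearEquivOfSurjective hg).symm.toLinearMap).toAddMonoidHom, ?_⟩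
    ext b
    show (LinearMap.range f).liftQ _ hle ((hfg.linearEquivOfSurjective hg).symm (g b)) = χ b
    rw [Function.Exact.linearEquivOfSurjective_symm_apply]
    rfl
  · rintro ⟨ψ, rfl⟩
    ext a
    exact congrArg ψ (hfg.apply_apply_eq_zero a) |>.trans (map_zero ψ)

end CharacterModule

section CharacterModuleDual
variable {R : Type u} [Ring R] {A B : Type u} [AddCommGroup A] [Module R A] [AddCommGroup B]
  [Module R B]

open CharacterModule

noncomputable def charDual (f : A →ₗ[R] B) : CharacterModule B →ₗ[Rᵐᵒᵖ] CharacterModule A where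
  toFun := dual (f.restrictScalars ℤ)
  map_add' := map_add _
  map_smul' r c := by
    ext a
    exact congrArg c (f.map_smul r.unop a).symm

lemma charDual_injective {f : A →ₗ[R] B} (hf : Function.Surjective f) :
    Function.Injective (charDual f) :=
  dual_injective_of_surjective (f.restrictScalars ℤ) hf

noncomputable def charDualCokerEquiv (f : A →ₗ[R] B) (hf : Function.Surjective f) :
    (CharacterModule A ⧸ LinearMap.range (charDual f)) ≃ₗ[Rᵐᵒᵖ]
      CharacterModule (LinearMap.ker f) :=
  Function.Exact.linearEquivOfSurjective (g := charDual (LinearMap.ker f).subtype)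
    (exact_dual (f := ((LinearMap.ker f).subtype).restrictScalars ℤ) (g := f.restrictScalars ℤ)
      (LinearMap.exact_subtype_ker_map f) hf)
    (dual_surjective_of_injective _ (LinearMap.ker f).injective_subtype)

end CharacterModuleDual

section CharacterModuleInjective
variable {R : Type u} [Ring R]

noncomputable def coinduceChar {Y : Type u} [AddCommGroup Y] [Module Rᵐᵒᵖ Y]
    (χ : CharacterModule Y) : Y →ₗ[Rᵐᵒᵖ] CharacterModule R where
  toFun y := AddMonoidHom.mk' (fun r => χ (MulOpposite.op r • y)) fun r s => by
    rw [MulOpposite.op_add, add_smul, map_add]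
  map_add' y y' := by
    ext r
    exact (congrArg χ (smul_add _ y y')).trans (map_add χ _ _)
  map_smul' s y := by
    ext r
    show χ (MulOpposite.op r • s • y) = χ (MulOpposite.op (s.unop • r) • y)
    rw [smul_eq_mul, MulOpposite.op_mul, MulOpposite.op_unop, mul_smul]

/-- `R⁺ = Hom_ℤ(R, ℚ/ℤ)` is coinduced from the injective abelian group `ℚ/ℤ`. -/
lemma injective_characterModule_self : Module.Injective Rᵐᵒᵖ (CharacterModule R) := by
  refine ⟨fun X Y _ _ _ _ i hi g => ?_⟩
  obtain ⟨χ, hχ⟩ := CharacterModule.dual_surjective_of_injective (i.restrictScalars ℤ) hi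
    ((AddMonoidHom.eval (1 : R)).comp g.toAddMonoidHom)
  refine ⟨coinduceChar χ, fun x => ?_⟩
  ext r
  calc χ (MulOpposite.op r • i x) = χ (i (MulOpposite.op r • x)) := by rw [i.map_smul]
    _ = g (MulOpposite.op r • x) 1 := DFunLike.congr_fun hχ _
    _ = g x r := by
      rw [map_smul]
      exact congrArg (g x) (mul_one r)

end CharacterModuleInjective

section FreeCharacterModule
variable {R : Type u} [Ring R]

noncomputable def charFinsuppEquiv (ι : Type u) :
    CharacterModule (ι →₀ R) ≃ₗ[Rᵐᵒᵖ] (ι → CharacterModule R) where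
  __ := (Finsupp.liftAddHom (α := ι) (M := R) (N := AddCircle (1 : ℚ))).symm
  map_smul' r χ := by
    ext i s
    show χ (r.unop • Finsupp.single i s) = χ (Finsupp.single i (r.unop • s))
    rw [Finsupp.smul_single]

lemma injective_characterModule_finsupp (ι : Type u) :
    Module.Injective Rᵐᵒᵖ (CharacterModule (ι →₀ R)) :=
  have := injective_characterModule_self (R := R)
  .of_linearEquiv (charFinsuppEquiv ι).symm inferInstance

end FreeCharacterModule

section Lambek
variable {R : Type u} [Ring R] {N M : Type u} [AddCommGroup N] [Module Rᵐᵒᵖ N] [AddCommGroup M] [Module R M]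

noncomputable def NCTensor.tmul (n : N) (m : M) : NCTensor R N M :=
  Submodule.Quotient.mk (n ⊗ₜ[ℤ] m)

lemma NCTensor.op_smul_tmul (r : R) (n : N) (m : M) :
    tmul (MulOpposite.op r • n) m = tmul (R := R) n (r • m) :=
  (Submodule.Quotient.eq _).mpr (Submodule.subset_span ⟨n, r, m, rfl⟩)

lemma NCTensor.tmul_add (n : N) (m m' : M) :
    tmul n (m + m') = tmul (R := R) n m + tmul n m' :=
  congrArg Submodule.Quotient.mk (TensorProduct.tmul_add n m m')

lemma NCTensor.add_tmul (n n' : N) (m : M) :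
    tmul (n + n') m = tmul (R := R) n m + tmul n' m :=
  congrArg Submodule.Quotient.mk (TensorProduct.add_tmul n n' m)

lemma NCTensor.character_ext {χ χ' : CharacterModule (NCTensor R N M)}
    (h : ∀ n m, χ (tmul n m) = χ' (tmul n m)) : χ = χ' := by
  ext x
  obtain ⟨x, rfl⟩ := Submodule.mkQ_surjective _ x
  induction x using TensorProduct.induction_on with
  | zero => exact (map_zero χ).trans (map_zero χ').symm
  | tmul n m => exact h n m
  | add x y hx hy =>
    exact (map_add χ _ _).trans ((congrArg₂ (· + ·) hx hy).trans (map_add χ' _ _).symm)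

noncomputable def charNCTensorEquiv :
    CharacterModule (NCTensor R N M) ≃ (N →ₗ[Rᵐᵒᵖ] CharacterModule M) where
  toFun χ :=
    { toFun n := AddMonoidHom.mk' (fun m => χ (NCTensor.tmul n m)) fun m m' => by
        rw [NCTensor.tmul_add, map_add]
      map_add' n n' := by
        ext m
        exact (congrArg χ (NCTensor.add_tmul n n' m)).trans (map_add χ _ _)
      map_smul' r n := by
        ext m
        exact congrArg χ (NCTensor.op_smul_tmul r.unop n m) }
  invFun φ := ((NCRel R N M).liftQ (TensorProduct.liftAddHom φ.toAddMonoidHom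
      fun k n m => by
        show φ (k • n) m = φ n (k • m)
        rw [map_zsmul, map_zsmul]
        rfl).toIntLinearMap
    (Submodule.span_le.mpr (by
      rintro _ ⟨n, r, m, rfl⟩
      rw [SetLike.mem_coe, LinearMap.mem_ker, map_sub]
      show φ (MulOpposite.op r • n) m - φ n (r • m) = 0
      rw [φ.map_smul, sub_eq_zero]
      rfl))).toAddMonoidHom
  left_inv χ := NCTensor.character_ext fun n m => rfl
  right_inv φ := rfl

lemma charNCTensorEquiv_dual_NCmapL {N' : Type u} [AddCommGroup N'] [Module Rᵐᵒᵖ N']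
    (f : N →ₗ[Rᵐᵒᵖ] N') (χ : CharacterModule (NCTensor R N' M)) :
    charNCTensorEquiv (CharacterModule.dual (NCmapL R M f) χ) = charNCTensorEquiv χ ∘ₗ f :=
  rfl

theorem flatModule_iff_injective_characterModule :
    FlatModule R M ↔ Module.Injective Rᵐᵒᵖ (CharacterModule M) := by
  refine ⟨fun hM => ⟨fun X Y _ _ _ _ i hi g => ?_⟩, fun hM N N' _ _ _ _ f hf => ?_⟩
  · obtain ⟨χ, hχ⟩ := CharacterModule.dual_surjective_of_injective _ (hM X Y i hi)
      (charNCTensorEquiv.symm g)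
    refine ⟨charNCTensorEquiv χ, fun x => ?_⟩
    rw [← LinearMap.comp_apply, ← charNCTensorEquiv_dual_NCmapL, hχ, Equiv.apply_symm_apply]
  · rw [← CharacterModule.dual_surjective_iff_injective]
    intro χ
    obtain ⟨ψ, hψ⟩ := hM.out f hf (charNCTensorEquiv χ)
    refine ⟨charNCTensorEquiv.symm ψ, charNCTensorEquiv.injective ?_⟩
    rw [charNCTensorEquiv_dual_NCmapL, Equiv.apply_symm_apply]
    exact LinearMap.ext hψ

end Lambek

theorem fdLE_iff_idLE_characterModule {R : Type u} [Ring R] (n : ℕ) (M : ModuleCat.{u} R) :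
    fdLE R n M ↔ idLE Rᵐᵒᵖ n (ModuleCat.of Rᵐᵒᵖ (CharacterModule M)) := by
  induction n generalizing M with
  | zero => exact flatModule_iff_injective_characterModule
  | succ n ih =>
    constructor
    · rintro ⟨G, π, hπ, hG, hK⟩
      exact ⟨ModuleCat.of Rᵐᵒᵖ (CharacterModule G), charDual π, charDual_injective hπ,
        flatModule_iff_injective_characterModule.mp hG,
        idLE_of_linearEquiv n (charDualCokerEquiv π hπ).symm ((ih _).mp hK)⟩
    · intro h
      let π := Finsupp.linearCombination R (id : M → M)
      have hπ : Function.Surjective π := Finsupp.linearCombination_id_surjective R M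
      have hF := injective_characterModule_finsupp (R := R) M
      refine ⟨ModuleCat.of R (M →₀ R), π, hπ, flatModule_iff_injective_characterModule.mpr hF,
        (ih _).mpr ?_⟩
      exact idLE_of_linearEquiv n (charDualCokerEquiv π hπ)
        (idLE_quotient_of_idLE_succ h hF (charDual π) (charDual_injective hπ))

/-- For any ring `R` and any left `R`-module `M`, the flat dimension of `M` equals the
injective dimension of its character module `M⁺ = Hom_ℤ(M, ℚ/ℤ)` as a right `R`-module. -/
theorem stmt17 (R : Type u) [Ring R] (M : ModuleCat.{u} R) :
    flatDim R M = injDim Rᵐᵒᵖ (ModuleCat.of Rᵐᵒᵖ (CharacterModule ↥M)) := by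
  simp only [flatDim, injDim, fdLE_iff_idLE_characterModule]
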